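/- Let a, b, S, c, c* be real numbers with S > 0, c* = S^(3/2)/3, 0 < c < c*, a ≥ 0, b ≥ a, a ≥ S * b^(1/3), and a/4 + b/12 ≤ c. Then a = 0. -/
import Mathlib


theorem stmt_0 (a b S c cstar : ℝ) (hS : 0 < S)
    (hcstar : cstar = S ^ ((3:ℝ)/2) / 3)
    (hc0 : 0 < c) (hcc : c < cstar)
    (ha : 0 ≤ a) (hba : a ≤ b)
    (hSob : S * b ^ ((1:ℝ)/3) ≤ a)
    (hcb : a / 4 + b / 12 ≤ c) : a = 0 := by
  by_contra h
  have ha' : 0 < a := lt_of_le_of_ne ha (Ne.symm h)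
  have hb : 0 < b := lt_of_lt_of_le ha' hba
  have hb13 : (0:ℝ) < b ^ ((1:ℝ)/3) := Real.rpow_pos_of_pos hb _
  -- S ≤ b^(2/3)
  have hsplit : b = b ^ ((1:ℝ)/3) * b ^ ((2:ℝ)/3) := by
    rw [← Real.rpow_add hb]; norm_num
  have hS23 : S ≤ b ^ ((2:ℝ)/3) := by
    have : S * b ^ ((1:ℝ)/3) ≤ b ^ ((1:ℝ)/3) * b ^ ((2:ℝ)/3) := by
      rw [← hsplit]; exact le_trans hSob hba
    rw [mul_comm (b ^ ((1:ℝ)/3))] at this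
    exact le_of_mul_le_mul_right this hb13
  -- b ≥ S^(3/2)
  have hbS : S ^ ((3:ℝ)/2) ≤ b := by
    have h1 : (S : ℝ) ^ ((3:ℝ)/2) ≤ (b ^ ((2:ℝ)/3)) ^ ((3:ℝ)/2) :=
      Real.rpow_le_rpow (le_of_lt hS) hS23 (by norm_num)
    rw [← Real.rpow_mul hb.le, show (2:ℝ)/3 * (3/2) = 1 by norm_num, Real.rpow_one] at h1
    exact h1
  -- b^(1/3) ≥ S^(1/2)
  have hb13S : S ^ ((1:ℝ)/2) ≤ b ^ ((1:ℝ)/3) := by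
    have h1 : (S ^ ((3:ℝ)/2)) ^ ((1:ℝ)/3) ≤ b ^ ((1:ℝ)/3) :=
      Real.rpow_le_rpow (Real.rpow_nonneg hS.le _) hbS (by norm_num)
    rwa [← Real.rpow_mul hS.le, show (3:ℝ)/2 * (1/3) = 1/2 by norm_num] at h1
  -- a ≥ S^(3/2)
  have haS : S ^ ((3:ℝ)/2) ≤ a := by
    have h1 : S * S ^ ((1:ℝ)/2) ≤ S * b ^ ((1:ℝ)/3) :=
      mul_le_mul_of_nonneg_left hb13S hS.le
    have h2 : S * S ^ ((1:ℝ)/2) = S ^ ((3:ℝ)/2) := by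
      nth_rewrite 1 [← Real.rpow_one S]
      rw [← Real.rpow_add hS]; norm_num
    linarith
  rw [hcstar] at hcc
  linarith
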